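/- arXiv:2602.21895 — 8 statements merged into one kernel-verified Lean document; each statement's English description precedes it below -/
import Mathlib

section
/- The Thue–Morse word in base 3/2 satisfies the recurrences t_{3n} = t_n-like relations: specifically, t_{3n} = t_{2n}, t_{3n+1} = t_{2n}, and t_{3n+2} = 1 - t_{2n+1} for all n ≥ 0, and these relations together with t_0 determine the sequence uniquely: there are exactly two {0,1}-valued sequences satisfying these relations, which are bitwise complements of each other. -/
/-- A sequence `x : ℕ → Fin 2` satisfies the base-3/2 Thue–Morse relations. -/
def TMRel (x : ℕ → Fin 2) : Prop :=
  ∀ n : ℕ, x (3*n) = x (2*n) ∧ x (3*n+1) = x (2*n) ∧ x (3*n+2) = 1 - x (2*n+1)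

def tm : ℕ → Fin 2
  | n =>
    if _h : n = 0 then 0
    else if _h2 : n % 3 = 2 then 1 - tm (2*(n/3)+1)
    else tm (2*(n/3))
  decreasing_by all_goals omega

lemma tm_rel : TMRel tm := by
  intro n
  refine ⟨?_, ?_, ?_⟩
  · rcases Nat.eq_zero_or_pos n with rfl | hn
    · norm_num
    · rw [tm]
      have h1 : ¬ (3*n = 0) := by omega
      have h2 : ¬ (3*n % 3 = 2) := by omega
      have h3 : 3*n/3 = n := by omega
      simp [h1, h2, h3]
  · rw [tm]
    have h1 : ¬ (3*n+1 = 0) := by omega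
    have h2 : ¬ ((3*n+1) % 3 = 2) := by omega
    have h3 : (3*n+1)/3 = n := by omega
    simp [h1, h2, h3]
  · rw [tm]
    have h1 : ¬ (3*n+2 = 0) := by omega
    have h2 : (3*n+2) % 3 = 2 := by omega
    have h3 : (3*n+2)/3 = n := by omega
    simp [h1, h2, h3]

lemma tm_uniq (x y : ℕ → Fin 2) (hx : TMRel x) (hy : TMRel y) (h0 : x 0 = y 0) :
    x = y := by
  funext n
  induction n using Nat.strong_induction_on with
  | _ n ih =>
    obtain ⟨q, r, hr, rfl⟩ : ∃ q r, r < 3 ∧ n = 3*q + r :=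
      ⟨n/3, n%3, Nat.mod_lt _ (by norm_num), by omega⟩
    interval_cases r
    · rcases Nat.eq_zero_or_pos q with rfl | hq
      · simpa using h0
      · have := ih (2*q) (by omega)
        rw [show 3*q+0 = 3*q by ring, (hx q).1, (hy q).1, this]
    · have := ih (2*q) (by omega)
      rw [(hx q).2.1, (hy q).2.1, this]
    · have := ih (2*q+1) (by omega)
      rw [(hx q).2.2, (hy q).2.2, this]

theorem stmt0 :
    ∃ a b : ℕ → Fin 2, TMRel a ∧ TMRel b ∧ a ≠ b ∧
      (∀ n, b n = 1 - a n) ∧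
      (∀ x, TMRel x → x = a ∨ x = b) ∧
      (∀ x y, TMRel x → TMRel y → x 0 = y 0 → x = y) := by
  have hc : TMRel (fun n => 1 - tm n) := by
    intro n
    refine ⟨?_, ?_, ?_⟩
    · show 1 - tm (3*n) = 1 - tm (2*n); rw [(tm_rel n).1]
    · show 1 - tm (3*n+1) = 1 - tm (2*n); rw [(tm_rel n).2.1]
    · show 1 - tm (3*n+2) = 1 - (1 - tm (2*n+1)); rw [(tm_rel n).2.2]
  refine ⟨tm, fun n => 1 - tm n, tm_rel, hc, ?_, fun n => rfl, ?_, tm_uniq⟩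
  · intro h
    have := congrFun h 0
    have h0 : tm 0 = 0 := by rw [tm]; simp
    rw [h0] at this
    exact absurd this (by decide)
  · intro x hx
    have hx0 : x 0 = 0 ∨ x 0 = 1 := by
      have := (x 0).isLt
      omega
    rcases hx0 with h | h
    · left
      exact tm_uniq x tm hx tm_rel (by rw [h, tm]; simp)
    · right
      exact tm_uniq x _ hx hc (by
          rw [h]
          have h0 : tm 0 = 0 := by rw [tm]; simp
          rw [h0]; decide)
end

section
/- If x : ℕ → Fin 2 satisfies x(3n) = x(2n), x(3n+1) = x(2n), x(3n+2) = 1 - x(2n+1) for all n, and y is defined by y(n) = x(n+1) - x(n) mod 2, then y satisfies the Toeplitz-type relations: y(3n) = 0, y(3n+1) = 1 - y(2n), y(3n+2) = 1 - y(2n+1) for all n ≥ 0. -/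
theorem stmt1 (x : ℕ → Fin 2)
    (hx : ∀ n, x (3*n) = x (2*n) ∧ x (3*n+1) = x (2*n) ∧ x (3*n+2) = 1 - x (2*n+1))
    (y : ℕ → Fin 2) (hy : ∀ n, y n = x (n+1) + x n) :
    ∀ n, y (3*n) = 0 ∧ y (3*n+1) = 1 - y (2*n) ∧ y (3*n+2) = 1 - y (2*n+1) := by
  intro n
  obtain ⟨h0, h1, h2⟩ := hx n
  obtain ⟨h0', h1', h2'⟩ := hx (n+1)
  have e0 := hy (3*n)
  have e1 := hy (3*n+1)
  have e2 := hy (3*n+2)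
  have f0 := hy (2*n)
  have f1 := hy (2*n+1)
  have k : 3*(n+1) = 3*n+2+1 := by ring
  have k2 : 2*(n+1) = 2*n+1+1 := by ring
  rw [k] at h0'; rw [k2] at h0'
  refine ⟨?_, ?_, ?_⟩
  · rw [e0, h1, h0]; generalize x (2*n) = a; revert a; decide
  · have k3 : 3*n+1+1 = 3*n+2 := by ring
    rw [e1, k3, h2, h1, f0]
    generalize x (2*n) = a; generalize x (2*n+1) = b
    revert a b; decide
  · rw [e2, f1, h0', h2]
    generalize x (2*n+1) = a; generalize x (2*n+1+1) = b
    revert a b; decide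
end

section
/- The first difference sequence y of the base-3/2 Thue–Morse word satisfies the period-9 Toeplitz relations: for all m ≥ 0, y(9m) = y(9m+3) = y(9m+6) = 0, y(9m+1) = y(9m+5) = 1, y(9m+2) = y(4m), y(9m+4) = y(4m+1), y(9m+7) = y(4m+2), and y(9m+8) = y(4m+3). -/
theorem stmt2 (y : ℕ → Fin 2)
    (hy : ∀ n, y (3*n) = 0 ∧ y (3*n+1) = 1 - y (2*n) ∧ y (3*n+2) = 1 - y (2*n+1)) :
    ∀ m, y (9*m) = 0 ∧ y (9*m+3) = 0 ∧ y (9*m+6) = 0 ∧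
      y (9*m+1) = 1 ∧ y (9*m+5) = 1 ∧
      y (9*m+2) = y (4*m) ∧ y (9*m+4) = y (4*m+1) ∧
      y (9*m+7) = y (4*m+2) ∧ y (9*m+8) = y (4*m+3) := by
  have key : ∀ a : Fin 2, 1 - (1 - a) = a := by decide
  have one0 : (1 : Fin 2) - 0 = 1 := by decide
  intro m
  refine ⟨?_, ?_, ?_, ?_, ?_, ?_, ?_, ?_, ?_⟩
  · have h := (hy (3*m)).1; rw [show 3*(3*m) = 9*m by ring] at h; exact h
  · have h := (hy (3*m+1)).1; rw [show 3*(3*m+1) = 9*m+3 by ring] at h; exact h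
  · have h := (hy (3*m+2)).1; rw [show 3*(3*m+2) = 9*m+6 by ring] at h; exact h
  · have h := (hy (3*m)).2.1
    rw [show 3*(3*m)+1 = 9*m+1 by ring, show 2*(3*m) = 3*(2*m) by ring,
      (hy (2*m)).1, one0] at h
    exact h
  · have h := (hy (3*m+1)).2.2
    rw [show 3*(3*m+1)+2 = 9*m+5 by ring, show 2*(3*m+1)+1 = 3*(2*m+1) by ring,
      (hy (2*m+1)).1, one0] at h
    exact h
  · have h := (hy (3*m)).2.2
    rw [show 3*(3*m)+2 = 9*m+2 by ring, show 2*(3*m)+1 = 3*(2*m)+1 by ring,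
      (hy (2*m)).2.1, show 2*(2*m) = 4*m by ring, key] at h
    exact h
  · have h := (hy (3*m+1)).2.1
    rw [show 3*(3*m+1)+1 = 9*m+4 by ring, show 2*(3*m+1) = 3*(2*m)+2 by ring,
      (hy (2*m)).2.2, show 2*(2*m)+1 = 4*m+1 by ring, key] at h
    exact h
  · have h := (hy (3*m+2)).2.1
    rw [show 3*(3*m+2)+1 = 9*m+7 by ring, show 2*(3*m+2) = 3*(2*m+1)+1 by ring,
      (hy (2*m+1)).2.1, show 2*(2*m+1) = 4*m+2 by ring, key] at h
    exact h
  · have h := (hy (3*m+2)).2.2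
    rw [show 3*(3*m+2)+2 = 9*m+8 by ring, show 2*(3*m+2)+1 = 3*(2*m+1)+2 by ring,
      (hy (2*m+1)).2.2, show 2*(2*m+1)+1 = 4*m+3 by ring, key] at h
    exact h
end

section
/- For a binary sequence x over {0,1}, x is uniformly recurrent if and only if its first difference sequence Δ(x), defined by Δ(x)(n) = x(n+1) + x(n) mod 2, is uniformly recurrent. -/
/-- The word `u` occurs in the sequence `x` at position `i`. -/
def OccursAt (x : ℕ → Fin 2) (u : List (Fin 2)) (i : ℕ) : Prop :=
  ∀ j, (h : j < u.length) → x (i + j) = u.get ⟨j, h⟩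

/-- Every factor of `x` occurs in `x` with bounded gaps. -/
def UniformlyRecurrent (x : ℕ → Fin 2) : Prop :=
  ∀ u : List (Fin 2), (∃ i, OccursAt x u i) →
    ∃ L, ∀ m, ∃ i, m ≤ i ∧ i + u.length ≤ m + L ∧ OccursAt x u i

lemma key_lemma (x : ℕ → Fin 2) (p j len : ℕ)
    (h : ∀ t, t + 1 < len → x (j+t+1) + x (j+t) = x (p+t+1) + x (p+t)) :
    ∀ t, t < len → x (j+t) = x (p+t) + (x j + x p) := by
  intro t
  induction t with
  | zero =>
    intro _
    exact (by decide : ∀ a b : Fin 2, a = b + (a + b)) (x j) (x p)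
  | succ t ih =>
    intro ht
    have h1 := h t ht
    have h2 := ih (Nat.lt_of_succ_lt ht)
    exact (by decide : ∀ a b a' b' c : Fin 2, a + b = a' + b' → b = b' + c → a = a' + c)
      _ _ _ _ _ h1 h2

lemma my_get_ofFn {α : Type*} {n : ℕ} (f : Fin n → α) (t : ℕ) (h1 : t < (List.ofFn f).length) :
    (List.ofFn f).get ⟨t, h1⟩ = f ⟨t, by simpa using h1⟩ := by
  rw [List.get_ofFn]
  congr 1

lemma occursAt_ofFn_iff (y : ℕ → Fin 2) {n : ℕ} (f : Fin n → Fin 2) (j : ℕ) :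
    OccursAt y (List.ofFn f) j ↔ ∀ t, (h : t < n) → y (j + t) = f ⟨t, h⟩ := by
  constructor
  · intro h t ht
    have := h t (by simpa using ht)
    rw [my_get_ofFn] at this
    exact this
  · intro h t ht
    rw [my_get_ofFn]
    exact h t (by simpa using ht)

theorem stmt3 (x : ℕ → Fin 2) :
    UniformlyRecurrent x ↔ UniformlyRecurrent (fun n => x (n+1) + x n) := by
  constructor
  · -- forward
    intro hx v ⟨i, hv⟩
    set u : List (Fin 2) := List.ofFn (fun t : Fin (v.length + 1) => x (i + t)) with hu
    have hulen : u.length = v.length + 1 := by simp [hu]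
    obtain ⟨L, hL⟩ := hx u ⟨i, by
      rw [hu, occursAt_ofFn_iff]
      intro t ht
      rfl⟩
    refine ⟨L, fun m => ?_⟩
    obtain ⟨j, hmj, hjl, hocc⟩ := hL m
    rw [hu, occursAt_ofFn_iff] at hocc
    refine ⟨j, hmj, by omega, ?_⟩
    intro t ht
    have e1 : x (j + t) = x (i + t) := hocc t (by omega)
    have e2 : x (j + t + 1) = x (i + t + 1) := hocc (t + 1) (by omega)
    have e3 := hv t ht
    show x (j + t + 1) + x (j + t) = _
    rw [e1, e2]
    exact e3
  · -- backward
    intro hD u ⟨i, hi⟩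
    rcases Nat.eq_zero_or_pos u.length with hn | hn
    · exact ⟨0, fun m => ⟨m, le_refl m, by omega, fun t ht => absurd ht (by omega)⟩⟩
    by_cases hcomp : ∃ i', ∀ t, (h : t < u.length) → x (i' + t) = u.get ⟨t, h⟩ + 1
    · -- complement occurs at i'
      obtain ⟨i', hi'⟩ := hcomp
      set p := min i i' with hp
      set q := max i i' with hq
      set len := q - p + u.length with hlen
      have hlen1 : 1 ≤ len := by omega
      set v : List (Fin 2) := List.ofFn (fun t : Fin (len - 1) => x (p + t + 1) + x (p + t)) with hv
      have hvlen : v.length = len - 1 := by simp [hv]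
      obtain ⟨L, hL⟩ := hD v ⟨p, by
        rw [hv, occursAt_ofFn_iff]
        intro t ht
        rfl⟩
      refine ⟨L + 1, fun m => ?_⟩
      obtain ⟨j, hmj, hjl, hocc⟩ := hL m
      rw [hv, occursAt_ofFn_iff] at hocc
      have hkey : ∀ t, t < len → x (j+t) = x (p+t) + (x j + x p) := by
        apply key_lemma
        intro t ht
        exact hocc t (by omega)
      have hc : x j + x p = 0 ∨ x j + x p = 1 := by
        rcases (x j + x p) with ⟨⟨⟩ | ⟨⟩ | k⟩
        · exact Or.inl rfl
        · exact Or.inr rfl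
        · omega
      rcases hc with hc | hc
      · refine ⟨j + (i - p), by omega, by omega, ?_⟩
        intro t ht
        have h1 := hkey ((i - p) + t) (by omega)
        rw [hc, add_zero] at h1
        have e : p + ((i - p) + t) = i + t := by omega
        rw [← Nat.add_assoc] at h1
        rw [e] at h1
        rw [h1]
        exact hi t ht
      · refine ⟨j + (i' - p), by omega, by omega, ?_⟩
        intro t ht
        have h1 := hkey ((i' - p) + t) (by omega)
        rw [hc] at h1
        have e : p + ((i' - p) + t) = i' + t := by omega
        rw [← Nat.add_assoc] at h1
        rw [e] at h1
        rw [h1, hi' t ht]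
        exact (by decide : ∀ a : Fin 2, a + 1 + 1 = a) _
    · -- complement does not occur
      set len := u.length with hlen
      set v : List (Fin 2) := List.ofFn (fun t : Fin (len - 1) => x (i + t + 1) + x (i + t)) with hv
      have hvlen : v.length = len - 1 := by simp [hv]
      obtain ⟨L, hL⟩ := hD v ⟨i, by
        rw [hv, occursAt_ofFn_iff]
        intro t ht
        rfl⟩
      refine ⟨L + 1, fun m => ?_⟩
      obtain ⟨j, hmj, hjl, hocc⟩ := hL m
      rw [hv, occursAt_ofFn_iff] at hocc
      have hkey : ∀ t, t < len → x (j+t) = x (i+t) + (x j + x i) := by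
        apply key_lemma
        intro t ht
        exact hocc t (by omega)
      have hc : x j + x i = 0 ∨ x j + x i = 1 := by
        rcases (x j + x i) with ⟨⟨⟩ | ⟨⟩ | k⟩
        · exact Or.inl rfl
        · exact Or.inr rfl
        · omega
      rcases hc with hc | hc
      · refine ⟨j, hmj, by omega, ?_⟩
        intro t ht
        have h1 := hkey t ht
        rw [hc, add_zero] at h1
        rw [h1]
        exact hi t ht
      · exfalso
        apply hcomp
        refine ⟨j, fun t ht => ?_⟩
        have h1 := hkey t ht
        rw [hc] at h1
        rw [h1, hi t ht]
end

section
/- For each k ≥ 0, the sequence j ↦ (n_0(j) mod 2, n_1(j) mod 2, …, n_k(j) mod 2), where n_ℓ(j) is the leftmost descendant at level ℓ of vertex j in the base-3/2 numeration tree (satisfying n_0(j) = j and n_{ℓ+1}(j) = ⌈3 n_ℓ(j) / 2⌉), is periodic in j with least period 2^{k+1}. -/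
/-- Leftmost descendant at level `ℓ` of vertex `j` in the base-3/2 numeration tree:
`n_0(j) = j`, `n_{ℓ+1}(j) = ⌈3 n_ℓ(j) / 2⌉`. -/
def nseq : ℕ → ℕ → ℕ
  | 0, j => j
  | ℓ+1, j => (3 * nseq ℓ j + 1) / 2

lemma nseq_succ' (ℓ j : ℕ) : nseq (ℓ+1) j = nseq ℓ ((3*j+1)/2) := by
  induction ℓ generalizing j with
  | zero => rfl
  | succ ℓ ih => show (3 * nseq (ℓ+1) j + 1)/2 = _; rw [ih j]; rfl

lemma nseq_add_even (ℓ j c : ℕ) : nseq ℓ (j + 2^ℓ * c) = nseq ℓ j + 3^ℓ * c := by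
  induction ℓ generalizing j c with
  | zero => simp [nseq]
  | succ ℓ ih =>
      show (3 * nseq ℓ (j + 2^(ℓ+1)*c) + 1)/2 = (3 * nseq ℓ j + 1)/2 + 3^(ℓ+1)*c
      have : (2:ℕ)^(ℓ+1)*c = 2^ℓ * (2*c) := by ring
      rw [this, ih j (2*c)]
      have h3 : (3:ℕ)^(ℓ+1) * c = 3 * (3^ℓ * c) := by ring
      have h4 : (3:ℕ)^ℓ * (2*c) = 2 * (3^ℓ * c) := by ring
      rw [h3, h4]
      generalize (3:ℕ)^ℓ * c = t
      omega

lemma nseq_inj (k : ℕ) : ∀ a c : ℕ, (∀ ℓ ≤ k, nseq ℓ (a + c) % 2 = nseq ℓ a % 2) →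
    2^(k+1) ∣ c := by
  induction k with
  | zero =>
      intro a c h
      have := h 0 le_rfl
      simp only [nseq] at this
      omega
  | succ k ih =>
      intro a c h
      have h0 := h 0 (Nat.zero_le _)
      simp only [nseq] at h0
      obtain ⟨c', rfl⟩ : 2 ∣ c := by omega
      have key : ∀ ℓ ≤ k, nseq ℓ ((3*a+1)/2 + 3*c') % 2 = nseq ℓ ((3*a+1)/2) % 2 := by
        intro ℓ hℓ
        have hh := h (ℓ+1) (by omega)
        rw [nseq_succ' ℓ (a + 2*c'), nseq_succ' ℓ a] at hh
        have : (3*(a + 2*c')+1)/2 = (3*a+1)/2 + 3*c' := by omega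
        rwa [this] at hh
      have hdvd := ih _ _ key
      have h2 : (2:ℕ)^(k+1) ∣ c' := (Nat.Coprime.dvd_of_dvd_mul_left
        (Nat.Coprime.pow_left _ (by norm_num)) hdvd)
      obtain ⟨d, rfl⟩ := h2
      exact ⟨d, by ring⟩

theorem stmt8 (k : ℕ) :
    (∀ j, (fun ℓ : Fin (k+1) => ((nseq ℓ (j + 2^(k+1)) : ZMod 2))) =
          (fun ℓ : Fin (k+1) => ((nseq ℓ j : ZMod 2)))) ∧
    (∀ p, 0 < p →
      (∀ j, (fun ℓ : Fin (k+1) => ((nseq ℓ (j + p) : ZMod 2))) =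
            (fun ℓ : Fin (k+1) => ((nseq ℓ j : ZMod 2)))) →
      2^(k+1) ≤ p) := by
  constructor
  · intro j
    funext ℓ
    have hℓ : (ℓ : ℕ) ≤ k := Nat.lt_succ_iff.mp ℓ.isLt
    have h : (2:ℕ)^(k+1) = 2^(ℓ:ℕ) * (2 * 2^(k - ℓ)) := by
      rw [← pow_succ']
      rw [← pow_add]
      congr 1
      omega
    rw [h, nseq_add_even]
    push_cast
    have : ((2 : ZMod 2)) = 0 := by decide
    rw [show ((3:ZMod 2)^(ℓ:ℕ) * (2 * 2^(k - (ℓ:ℕ))) = 0) by rw [this]; ring]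
    ring
  · intro p hp hper
    have h := hper 0
    have key : ∀ ℓ ≤ k, nseq ℓ (0 + p) % 2 = nseq ℓ 0 % 2 := by
      intro ℓ hℓ
      have := congrFun h ⟨ℓ, by omega⟩
      simp only at this
      rwa [ZMod.natCast_eq_natCast_iff, Nat.ModEq] at this
    exact Nat.le_of_dvd hp (nseq_inj k 0 p key)
end

section
/- Let f_0 : 0 ↦ 00, 1 ↦ 11 and f_1 : 0 ↦ 1, 1 ↦ 0 be morphisms on {0,1}*, and for i ∈ ℤ define Φ_i(a_0 a_1 ⋯ a_{k−1}) = f_{i mod 2}(a_0) f_{(i+1) mod 2}(a_1) ⋯ f_{(i+k−1) mod 2}(a_{k−1}). Then for every i ∈ ℤ and every nonempty word u of length k, the reversal of Φ_i(u) equals Φ_{k−1−i}(reversal of u). -/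
/-- `Φ_i` applies `f_0 : a ↦ aa` and `f_1 : a ↦ 1-a` alternately (starting with
`f_{i mod 2}`) to the successive letters of a word, and concatenates the images. -/
def Phi : ℤ → List (Fin 2) → List (Fin 2)
  | _, [] => []
  | i, a :: t => (if i % 2 = 0 then [a, a] else [1 - a]) ++ Phi (i+1) t

lemma Phi_mod (u : List (Fin 2)) : ∀ i j : ℤ, i % 2 = j % 2 → Phi i u = Phi j u := by
  induction u with
  | nil => intro i j h; rfl
  | cons a t ih =>
    intro i j h
    simp only [Phi, h, ih (i+1) (j+1) (by omega)]

lemma Phi_append (v w : List (Fin 2)) : ∀ j : ℤ,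
    Phi j (v ++ w) = Phi j v ++ Phi (j + v.length) w := by
  induction v with
  | nil => intro j; simp [Phi]
  | cons a t ih =>
    intro j
    rw [List.cons_append]
    show (if j % 2 = 0 then [a, a] else [1 - a]) ++ Phi (j+1) (t ++ w) = _
    rw [ih (j+1), Phi, List.append_assoc]
    congr 2
    apply Phi_mod
    have : j + 1 + (t.length : ℤ) = j + ((a :: t).length : ℤ) := by
      simp only [List.length_cons]; push_cast; ring
    rw [this]

lemma Phi_single (a : Fin 2) (i j : ℤ) (h : i % 2 = j % 2) :
    (Phi i [a]).reverse = Phi j [a] := by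
  simp only [Phi, List.append_nil, h]
  split <;> rfl

theorem stmt10 (i : ℤ) (u : List (Fin 2)) (hu : u ≠ []) :
    (Phi i u).reverse = Phi ((u.length : ℤ) - 1 - i) u.reverse := by
  induction u generalizing i with
  | nil => exact absurd rfl hu
  | cons a t ih =>
    rcases eq_or_ne t [] with rfl | ht
    · show (Phi i [a]).reverse = _
      rw [show ([a] : List (Fin 2)).reverse = [a] from rfl]
      exact Phi_single a i _ (by simp)
    · have hrev : (a :: t).reverse = t.reverse ++ [a] := by simp
      rw [hrev]
      rw [Phi_append t.reverse [a]]
      simp only [Phi, List.reverse_append, List.length_cons, List.length_reverse]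
      rw [ih (i+1) ht]
      congr 1
      · apply Phi_mod; omega
      · have hb : (if i % 2 = 0 then ([a, a] : List (Fin 2)) else [1 - a]) = Phi i [a] := by
          simp [Phi]
        rw [hb]
        exact Phi_single a i _ (by push_cast; omega)
end

section
/- Suppose μ : ℕ × Fin 2 × ℤ → ℝ≥0 satisfies: (1) k ↦ μ(n,a,k) is 2^n-periodic; (2) with q_n the inverse of 3 mod 2^{n+1}, (3/2)μ(n,a,k) = μ(n+1,a,2q_n k) + μ(n+1,1−a,2q_n k − q_n) + μ(n+1,a,2q_n k − 2q_n); (3) μ(n,0,k) + μ(n,1,k) = 2^{−n}. Then the functions δ_n(k) := 2^n(μ(n,0,k) − μ(n,1,k)) satisfy δ_n(k) = (1/3)[δ_{n+1}(2q_n k) − δ_{n+1}(2q_n k − q_n) + δ_{n+1}(2q_n k − 2q_n)] and |δ_n(k)| ≤ 1 for all n, k. -/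
theorem stmt12 (q : ℕ → ℤ) (hq : ∀ n : ℕ, 3 * q n ≡ 1 [ZMOD (2^(n+1))])
    (μ : ℕ → Fin 2 → ℤ → ℝ)
    (hpos : ∀ n a k, 0 ≤ μ n a k)
    (hper : ∀ n a k, μ n a (k + 2^n) = μ n a k)
    (hrec : ∀ n a k, (3/2) * μ n a k =
      μ (n+1) a (2 * q n * k) + μ (n+1) (1-a) (2 * q n * k - q n)
        + μ (n+1) a (2 * q n * k - 2 * q n))
    (hsum : ∀ n k, μ n 0 k + μ n 1 k = 1 / 2^n)
    (δ : ℕ → ℤ → ℝ) (hδ : ∀ n k, δ n k = 2^n * (μ n 0 k - μ n 1 k)) :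
    ∀ n k, δ n k = (1/3) * (δ (n+1) (2 * q n * k) - δ (n+1) (2 * q n * k - q n)
        + δ (n+1) (2 * q n * k - 2 * q n)) ∧ |δ n k| ≤ 1 := by
  intro n k
  have h0 := hrec n 0 k
  have h1 := hrec n 1 k
  have e0 : (1 - 0 : Fin 2) = 1 := by decide
  have e1 : (1 - 1 : Fin 2) = 0 := by decide
  rw [e0] at h0
  rw [e1] at h1
  constructor
  · rw [hδ, hδ, hδ, hδ, pow_succ]
    linear_combination ((2:ℝ)^n * 2/3) * h0 - ((2:ℝ)^n * 2/3) * h1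
  · rw [hδ]
    have hs := hsum n k
    have p0 := hpos n 0 k
    have p1 := hpos n 1 k
    have h2 : (0:ℝ) < 2^n := by positivity
    rw [abs_le]
    constructor
    · nlinarith [mul_le_mul_of_nonneg_left (show -(1/2^n : ℝ) ≤ μ n 0 k - μ n 1 k by linarith) h2.le, mul_one_div_cancel h2.ne']
    · nlinarith [mul_le_mul_of_nonneg_left (show μ n 0 k - μ n 1 k ≤ (1/2^n : ℝ) by linarith) h2.le, mul_one_div_cancel h2.ne']
end

section
/- Define M̃⁽²⁾(r) = (1/9)(1 − e(−3r) + e(−6r))(1 − e(−2r) + e(−4r)) where e(t) = exp(2πit). Then for every real s, the sum over j = 0,1,2,3 of |M̃⁽²⁾(s/4 + j/4)|² equals (4/81)(9 + 2cos(2πs) − 4cos(4πs)). -/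
/-- `e(t) = exp(2πit)`. -/
noncomputable def e (t : ℝ) : ℂ := Complex.exp (2 * Real.pi * Complex.I * t)

/-- `M̃⁽²⁾(r) = (1/9)(1 − e(−3r) + e(−6r))(1 − e(−2r) + e(−4r))`. -/
noncomputable def Mtilde2 (r : ℝ) : ℂ :=
  (1/9) * (1 - e (-3*r) + e (-6*r)) * (1 - e (-2*r) + e (-4*r))

/-! On the unit circle `1 - z + z²` has modulus `|2 cos θ - 1|`, so
`|M̃⁽²⁾(r)|² = (2 cos 6πr - 1)² (2 cos 4πr - 1)² / 81`. Adding the shift by `1/2` flips the sign of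
`cos 6πr` and adding the shift by `1/4` flips the signs of `cos 4πr` and `cos 12πr`, so the odd
parts cancel and the four-term sum becomes a polynomial in `cos 4πr`, which is then matched with
the right-hand side by the multiple-angle formulas. -/

open Real Finset

lemma e_add (a b : ℝ) : e (a + b) = e a * e b := by
  simp only [e, ← Complex.exp_add]
  push_cast
  ring_nf

lemma norm_e (t : ℝ) : ‖e t‖ = 1 := by
  rw [e, show 2 * π * Complex.I * t = ((2 * π * t : ℝ) : ℂ) * Complex.I by push_cast; ring]
  exact Complex.norm_exp_ofReal_mul_I _

lemma e_add_e_neg (t : ℝ) : e t + e (-t) = (2 * cos (2 * π * t) : ℝ) := by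
  simp only [e, Complex.ofReal_mul, Complex.ofReal_ofNat, Complex.ofReal_cos, Complex.cos]
  push_cast
  ring_nf

lemma one_sub_e_neg_add_e_neg_two_mul (t : ℝ) :
    1 - e (-t) + e (-2 * t) = e (-t) * (2 * cos (2 * π * t) - 1 : ℝ) := by
  have h1 : e (-t) * e t = 1 := by rw [← e_add]; simp [e]
  have h2 : e (-2 * t) = e (-t) * e (-t) := by rw [← e_add]; ring_nf
  rw [Complex.ofReal_sub, ← e_add_e_neg, Complex.ofReal_one, h2]
  linear_combination -h1

lemma sq_norm_Mtilde2 (r : ℝ) :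
    ‖Mtilde2 r‖ ^ 2 = ((2 * cos (6 * π * r) - 1) * (2 * cos (4 * π * r) - 1)) ^ 2 / 81 := by
  have h3 := one_sub_e_neg_add_e_neg_two_mul (3 * r)
  have h2 := one_sub_e_neg_add_e_neg_two_mul (2 * r)
  rw [show -2 * (3 * r) = -6 * r by ring, show -(3 * r) = -3 * r by ring] at h3
  rw [show -2 * (2 * r) = -4 * r by ring, show -(2 * r) = -2 * r by ring] at h2
  rw [Mtilde2, h3, h2]
  simp only [norm_mul, norm_e, Complex.norm_real, Real.norm_eq_abs, mul_pow, sq_abs]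
  norm_num
  ring_nf

lemma sq_norm_Mtilde2_add_sq_norm_Mtilde2_add_half (r : ℝ) :
    ‖Mtilde2 r‖ ^ 2 + ‖Mtilde2 (r + 1 / 2)‖ ^ 2 =
      (2 * cos (4 * π * r) - 1) ^ 2 * (6 + 4 * cos (12 * π * r)) / 81 := by
  have h6 : cos (6 * π * (r + 1 / 2)) = -cos (6 * π * r) := by
    rw [show 6 * π * (r + 1 / 2) = 6 * π * r + (3 : ℕ) * π by push_cast; ring,
      cos_add_nat_mul_pi]
    norm_num
  have h4 : cos (4 * π * (r + 1 / 2)) = cos (4 * π * r) := by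
    rw [show 4 * π * (r + 1 / 2) = 4 * π * r + 2 * π by ring, cos_add_two_pi]
  have h12 : cos (12 * π * r) = 2 * cos (6 * π * r) ^ 2 - 1 := by
    rw [← cos_two_mul]; ring_nf
  rw [sq_norm_Mtilde2, sq_norm_Mtilde2, h6, h4, h12]
  ring

lemma sum_sq_norm_Mtilde2_quarter_shifts (r : ℝ) :
    ∑ j ∈ range 4, ‖Mtilde2 (r + (j : ℝ) / 4)‖ ^ 2 =
      (4 / 81) * (9 + 2 * cos (8 * π * r) - 4 * cos (16 * π * r)) := by
  have h4 : cos (4 * π * (r + 1 / 4)) = -cos (4 * π * r) := by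
    rw [show 4 * π * (r + 1 / 4) = 4 * π * r + π by ring, cos_add_pi]
  have h12 : cos (12 * π * (r + 1 / 4)) = -cos (12 * π * r) := by
    rw [show 12 * π * (r + 1 / 4) = 12 * π * r + (3 : ℕ) * π by push_cast; ring,
      cos_add_nat_mul_pi]
    norm_num
  have h3 : cos (12 * π * r) = 4 * cos (4 * π * r) ^ 3 - 3 * cos (4 * π * r) := by
    rw [← cos_three_mul]; ring_nf
  have h8 : cos (8 * π * r) = 2 * cos (4 * π * r) ^ 2 - 1 := by
    rw [← cos_two_mul]; ring_nf
  have h16 : cos (16 * π * r) = 2 * cos (8 * π * r) ^ 2 - 1 := by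
    rw [← cos_two_mul]; ring_nf
  have hsplit : ∑ j ∈ range 4, ‖Mtilde2 (r + (j : ℝ) / 4)‖ ^ 2 =
      (‖Mtilde2 r‖ ^ 2 + ‖Mtilde2 (r + 1 / 2)‖ ^ 2) +
        (‖Mtilde2 (r + 1 / 4)‖ ^ 2 + ‖Mtilde2 (r + 1 / 4 + 1 / 2)‖ ^ 2) := by
    norm_num [sum_range_succ, add_assoc, add_left_comm]
  rw [hsplit, sq_norm_Mtilde2_add_sq_norm_Mtilde2_add_half,
    sq_norm_Mtilde2_add_sq_norm_Mtilde2_add_half, h4, h12, h16, h8, h3]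
  ring

theorem stmt14 (s : ℝ) :
    ∑ j ∈ Finset.range 4, ‖Mtilde2 (s/4 + (j:ℝ)/4)‖^2 =
      (4/81) * (9 + 2 * Real.cos (2 * Real.pi * s) - 4 * Real.cos (4 * Real.pi * s)) := by
  rw [sum_sq_norm_Mtilde2_quarter_shifts, show 8 * π * (s / 4) = 2 * π * s by ring,
    show 16 * π * (s / 4) = 4 * π * s by ring]
end
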